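/- Soundness of the executable free: for every pointer p and configuration σ, either free p σ ∋ UB, or free p σ ∋ free^run p σ. -/

import Mathlib

/-! Executable memory model (instantiated at the concrete address type ℤ)
and its nondeterministic specification. -/

/-- Pointers: an address tagged with a provenance (`Option ℕ`, `none` is the wildcard). -/
structure PtrZ where
  a : ℤ
  pr : Option ℕ
deriving DecidableEq

/-- Memory configurations: a finite memory map, heap block map, frame stack, and
the set of used provenances. -/
structure ConfZ (SByte : Type) where
  mem : Finmap fun _ : ℤ => SByte × Option ℕ
  heap : Finmap fun _ : ℤ => List PtrZ
  stack : List (List PtrZ)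
  used : Finset ℕ

/-- Possible outcomes of a memory operation. -/
inductive ErrUbOom (A : Type) where
  | UB
  | OOM
  | FAIL
  | ok (a : A)

/-- The (nondeterministic, propositional) specification monad. -/
abbrev MemPropT (SByte X : Type) : Type :=
  ConfZ SByte → Set (ErrUbOom (ConfZ SByte × X))

/-- The (deterministic) executable monad. -/
abbrev MemExec (SByte X : Type) : Type :=
  ConfZ SByte → ErrUbOom (ConfZ SByte × X)

/-- `σ.mem[p] ≐ b`: address `p.a` maps to byte `b` with provenance `p.pr`. -/
def readByteAt {SByte : Type} (σ : ConfZ SByte) (p : PtrZ) (b : SByte) : Prop :=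
  σ.mem.lookup p.a = some (b, p.pr)

/-- A pointer is accessible in memory. -/
def accessible {SByte : Type} (σ : ConfZ SByte) (p : PtrZ) : Prop :=
  ∃ b, readByteAt σ p b

/-- Boolean accessibility check (used by the executable implementations). -/
def accessibleB {SByte : Type} (σ : ConfZ SByte) (p : PtrZ) : Bool :=
  match σ.mem.lookup p.a with
  | some (_, pr) => decide (pr = p.pr)
  | none => false

/-- The two memories agree on content and provenance at all addresses except those
of the pointers in `ps`. -/
def memEqExcept {SByte : Type} (σ1 σ2 : ConfZ SByte) (ps : List PtrZ) : Prop :=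
  ∀ (p' : PtrZ) (b : SByte),
    (∀ p ∈ ps, p'.a ≠ p.a) → (readByteAt σ1 p' b ↔ readByteAt σ2 p' b)


/-- Remove all addresses of a block of pointers from memory. -/
def eraseBlock {SByte : Type} (m : Finmap fun _ : ℤ => SByte × Option ℕ)
    (ps : List PtrZ) : Finmap fun _ : ℤ => SByte × Option ℕ :=
  ps.foldl (fun m' q => m'.erase q.a) m

/-- Specification of heap deallocation `free p`: `p.a` must be a heap root whose block
`ps` consists of pointers accessible in memory; the result removes `p.a` from the heap
and unmaps all addresses of `ps`, leaving everything else unchanged. `UB` when `p.a`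
is not a heap root or the block was not allocated (`OOM` is always allowed). -/
def freeSpec {SByte : Type} (p : PtrZ) : MemPropT SByte Unit :=
  fun σ1 =>
    { beh | beh = .OOM
          ∨ ((σ1.heap.lookup p.a = none ∨
              ∃ ps, σ1.heap.lookup p.a = some ps ∧ ∃ q ∈ ps, ¬ accessible σ1 q) ∧
              beh = .UB)
          ∨ ∃ (σ2 : ConfZ SByte) (ps : List PtrZ),
              σ2.stack = σ1.stack ∧ σ2.used = σ1.used ∧
              σ1.heap.lookup p.a = some ps ∧
              σ2.heap = σ1.heap.erase p.a ∧
              (∀ q ∈ ps, accessible σ1 q ∧ σ2.mem.lookup q.a = none) ∧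
              memEqExcept σ1 σ2 ps ∧
              beh = .ok (σ2, ()) }

/-- Executable heap deallocation: a deterministic function mirroring the specification. -/
def freeRun {SByte : Type} (p : PtrZ) : MemExec SByte Unit :=
  fun σ =>
    match σ.heap.lookup p.a with
    | some ps =>
        if ps.all (accessibleB σ) then
          .ok ({ σ with mem := eraseBlock σ.mem ps, heap := σ.heap.erase p.a }, ())
        else .UB
    | none => .UB

lemma eraseBlock_lookup {SByte : Type} (ps : List PtrZ)
    (m : Finmap fun _ : ℤ => SByte × Option ℕ) (a : ℤ) :
    (eraseBlock m ps).lookup a =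
      if ∃ q ∈ ps, q.a = a then none else m.lookup a := by
  induction ps generalizing m with
  | nil => simp [eraseBlock]
  | cons q qs ih =>
    simp only [eraseBlock, List.foldl_cons] at *
    rw [ih]
    by_cases hq : q.a = a
    · subst hq
      have : ∃ r ∈ q :: qs, r.a = q.a := ⟨q, List.mem_cons_self, rfl⟩
      simp [Finmap.lookup_erase, this]
    · rw [Finmap.lookup_erase_ne (by exact fun h' => hq h'.symm)]
      by_cases h : ∃ r ∈ qs, r.a = a
      · have : ∃ r ∈ q :: qs, r.a = a := by
          obtain ⟨r, hr, hra⟩ := h; exact ⟨r, List.mem_cons_of_mem _ hr, hra⟩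
        simp [h, this]
      · have : ¬ ∃ r ∈ q :: qs, r.a = a := by
          simp only [List.mem_cons]
          rintro ⟨r, (rfl | hr), hra⟩
          · exact hq hra
          · exact h ⟨r, hr, hra⟩
        simp [h, this, hq]

lemma accessibleB_iff {SByte : Type} (σ : ConfZ SByte) (q : PtrZ) :
    accessibleB σ q = true ↔ accessible σ q := by
  unfold accessibleB accessible readByteAt
  cases h : σ.mem.lookup q.a with
  | none => simp
  | some bp =>
    obtain ⟨b, pr⟩ := bp
    simp only [decide_eq_true_eq]
    constructor
    · rintro rfl; exact ⟨b, rfl⟩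
    · rintro ⟨b', hb'⟩
      simp only [Option.some.injEq, Prod.mk.injEq] at hb'
      exact hb'.2

/-- Soundness of the executable free: for every pointer `p` and configuration `σ`,
either `free p σ ∋ UB`, or `free p σ ∋ free^run p σ`. -/
theorem freeRun_sound {SByte : Type} (p : PtrZ) (σ : ConfZ SByte) :
    ErrUbOom.UB ∈ freeSpec p σ ∨ freeRun p σ ∈ freeSpec p σ := by
  cases hh : σ.heap.lookup p.a with
  | none =>
    left
    exact Or.inr (Or.inl ⟨Or.inl hh, rfl⟩)
  | some ps =>
    by_cases hall : ps.all (accessibleB σ)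
    · right
      have hrun : freeRun p σ = .ok
          ({ σ with mem := eraseBlock σ.mem ps, heap := σ.heap.erase p.a }, ()) := by
        unfold freeRun; rw [hh]; simp [hall]
      rw [hrun]
      refine Or.inr (Or.inr ⟨{ σ with mem := eraseBlock σ.mem ps, heap := σ.heap.erase p.a },
        ps, rfl, rfl, hh, rfl, ?_, ?_, rfl⟩)
      · intro q hq
        have hacc : accessible σ q := (accessibleB_iff σ q).mp (by
          simpa using List.all_eq_true.mp hall q hq)
        refine ⟨hacc, ?_⟩
        rw [eraseBlock_lookup]
        have : ∃ r ∈ ps, r.a = q.a := ⟨q, hq, rfl⟩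
        simp [this]
      · intro p' b hne
        unfold readByteAt
        simp only
        rw [eraseBlock_lookup]
        have : ¬ ∃ q ∈ ps, q.a = p'.a := by
          rintro ⟨q, hq, hqa⟩
          exact hne q hq hqa.symm
        simp [this]
    · left
      refine Or.inr (Or.inl ⟨Or.inr ⟨ps, hh, ?_⟩, rfl⟩)
      simp only [List.all_eq_true, not_forall] at hall
      obtain ⟨q, hq, hacc⟩ := hall
      exact ⟨q, hq, fun h => hacc ((accessibleB_iff σ q).mpr h)⟩
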